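/- For φ(z₁,z₂) = (2z₁z₂ − z₁ − z₂)/(2 − z₁ − z₂) and α ∈ 𝕋, the function ψ¹_α(z) = ᾱ(B₁φ)(z)/(1 − ᾱφ(0,z₂)) equals (2ᾱ/((1−ᾱ)z₂ − 2)) · ((z₂−1)²/(2 − z₁ − z₂)); in particular, for α = −1 it simplifies to ψ¹_{−1}(z) = (1 − z₂)/(2 − z₁ − z₂), which is unbounded on 𝔻², while for α ≠ −1 it is bounded on 𝔻². -/

import Mathlib

open ComplexConjugate

noncomputable section

/-- The open unit bidisk `𝔻² ⊂ ℂ²`. -/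
def biDisk : Set (ℂ × ℂ) := {z | ‖z.1‖ < 1 ∧ ‖z.2‖ < 1}

/-- The rational inner function `φ(z₁,z₂) = (2z₁z₂ − z₁ − z₂)/(2 − z₁ − z₂)`. -/
def phiRIF (z : ℂ × ℂ) : ℂ := (2 * z.1 * z.2 - z.1 - z.2) / (2 - z.1 - z.2)

/-- The backward shift in the first variable, with the removable singularity
at `z₁ = 0` filled in holomorphically. -/
def B1 (f : ℂ × ℂ → ℂ) : ℂ × ℂ → ℂ := fun z =>
  if z.1 = 0 then deriv (fun w : ℂ => f (w, z.2)) 0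
  else (f z - f (0, z.2)) / z.1

/-- The symbol `ψ¹_α(z) = ᾱ(B₁φ)(z)/(1 − ᾱφ(0,z₂))`. -/
def psi1 (α : ℂ) (z : ℂ × ℂ) : ℂ :=
  conj α * B1 phiRIF z / (1 - conj α * phiRIF (0, z.2))

lemma two_sub_ne {a b : ℂ} (ha : ‖a‖ < 1) (hb : ‖b‖ < 1) : (2:ℂ) - a - b ≠ 0 := by
  intro h
  have h2 : a + b = 2 := by linear_combination -h
  have h3 : ‖a + b‖ ≤ ‖a‖ + ‖b‖ := norm_add_le _ _
  rw [h2] at h3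
  norm_num at h3
  linarith

lemma B1phi {z : ℂ × ℂ} (h1 : (2:ℂ) - z.1 - z.2 ≠ 0) (h2 : (2:ℂ) - z.2 ≠ 0) :
    B1 phiRIF z = -2 * (1 - z.2)^2 / ((2 - z.1 - z.2) * (2 - z.2)) := by
  unfold B1
  rcases eq_or_ne z.1 0 with h0 | h0
  · rw [if_pos h0]
    have hfun : (fun w : ℂ => phiRIF (w, z.2)) =
        fun w => (2 * w * z.2 - w - z.2) / (2 - w - z.2) := rfl
    have hid : HasDerivAt (fun w : ℂ => w) 1 0 := hasDerivAt_id 0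
    have hN : HasDerivAt (fun w : ℂ => 2 * w * z.2 - w - z.2) (2 * z.2 - 1) 0 := by
      have h := ((hid.const_mul (2 * z.2)).fun_sub hid).sub_const z.2
      have he : (fun w : ℂ => 2 * w * z.2 - w - z.2)
          = fun w : ℂ => (2 * z.2 * w - w) - z.2 := by funext w; ring
      rw [he]
      exact h.congr_deriv (by ring)
    have hD : HasDerivAt (fun w : ℂ => 2 - w - z.2) (-1) 0 := by
      have h := ((hasDerivAt_const (0:ℂ) (2:ℂ)).fun_sub hid).sub_const z.2
      exact h.congr_deriv (by norm_num)
    have hD0 : (2:ℂ) - (0:ℂ) - z.2 ≠ 0 := by simpa using h2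
    have hder := (hN.fun_div hD hD0)
    rw [hfun, hder.deriv, h0]
    field_simp
    ring
  · rw [if_neg h0]
    unfold phiRIF
    simp only
    have h2' : (2:ℂ) - 0 - z.2 ≠ 0 := by simpa using h2
    field_simp
    ring

lemma d3_ne {α : ℂ} (hα : ‖α‖ = 1) {b : ℂ} (hb : ‖b‖ < 1) :
    (1 - conj α) * b - 2 ≠ 0 := by
  intro h
  have h2 : (1 - conj α) * b = 2 := by linear_combination h
  have h3 : ‖(1 - conj α) * b‖ = 2 := by rw [h2]; norm_num
  have h4 : ‖(1:ℂ) - conj α‖ ≤ 2 := by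
    calc ‖(1:ℂ) - conj α‖ ≤ ‖(1:ℂ)‖ + ‖conj α‖ := norm_sub_le _ _
    _ = 2 := by rw [norm_one, RCLike.norm_conj, hα]; norm_num
  rw [norm_mul] at h3
  nlinarith [norm_nonneg ((1:ℂ) - conj α), norm_nonneg b]

lemma psi1_eq {α : ℂ} (hα : ‖α‖ = 1) {z : ℂ × ℂ} (hz : z ∈ biDisk) :
    psi1 α z = (2 * conj α / ((1 - conj α) * z.2 - 2)) *
        ((z.2 - 1) ^ 2 / (2 - z.1 - z.2)) := by
  obtain ⟨hz1, hz2⟩ := hz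
  have h1 : (2:ℂ) - z.1 - z.2 ≠ 0 := two_sub_ne hz1 hz2
  have h2 : (2:ℂ) - z.2 ≠ 0 := by
    have := two_sub_ne (a := 0) (by norm_num) hz2; simpa using this
  have h3 := d3_ne hα hz2
  have h4 : (2:ℂ) - (1 - conj α) * z.2 ≠ 0 := by
    intro h; apply h3; linear_combination -h
  unfold psi1
  rw [B1phi h1 h2]
  unfold phiRIF
  simp only
  have h2' : (2:ℂ) - 0 - z.2 ≠ 0 := by simpa using h2
  have hB : 1 - conj α * ((2 * 0 * z.2 - 0 - z.2) / (2 - 0 - z.2))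
      = (2 - (1 - conj α) * z.2) / (2 - z.2) := by
    field_simp; ring
  rw [hB, div_div_eq_mul_div]
  rw [show (2:ℂ) - (1 - conj α) * z.2 = -((1 - conj α) * z.2 - 2) by ring]
  field_simp
  ring

lemma psi1_neg_one {z : ℂ × ℂ} (hz : z ∈ biDisk) :
    psi1 (-1) z = (1 - z.2) / (2 - z.1 - z.2) := by
  have hα : ‖(-1 : ℂ)‖ = 1 := by norm_num
  rw [psi1_eq hα hz]
  have hconj : conj (-1 : ℂ) = -1 := by simp
  rw [hconj]
  have h1 : (2:ℂ) - z.1 - z.2 ≠ 0 := two_sub_ne hz.1 hz.2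
  have h5 : z.2 - 1 ≠ 0 := by
    intro h
    have he : z.2 = 1 := by linear_combination h
    have hlt := hz.2
    rw [he] at hlt
    norm_num at hlt
  rw [show (1 - -1 : ℂ) * z.2 - 2 = 2 * (z.2 - 1) from by ring, div_mul_div_comm]
  rw [div_eq_div_iff (mul_ne_zero (mul_ne_zero two_ne_zero h5) h1) h1]
  ring

/-- for `φ = (2z₁z₂ − z₁ − z₂)/(2 − z₁ − z₂)` and `α ∈ 𝕋`, the
function `ψ¹_α(z) = ᾱ(B₁φ)(z)/(1 − ᾱφ(0,z₂))` equals
`(2ᾱ/((1−ᾱ)z₂ − 2))·((z₂−1)²/(2 − z₁ − z₂))` on `𝔻²`; for `α = −1` it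
simplifies to `(1 − z₂)/(2 − z₁ − z₂)`, which is unbounded on `𝔻²`, while for
`α ≠ −1` it is bounded on `𝔻²`. -/
theorem stmt18 (α : ℂ) (hα : ‖α‖ = 1) :
    (∀ z ∈ biDisk, psi1 α z =
      (2 * conj α / ((1 - conj α) * z.2 - 2)) *
        ((z.2 - 1) ^ 2 / (2 - z.1 - z.2))) ∧
    (∀ z ∈ biDisk, psi1 (-1) z = (1 - z.2) / (2 - z.1 - z.2)) ∧
    (¬ ∃ C : ℝ, ∀ z ∈ biDisk, ‖psi1 (-1) z‖ ≤ C) ∧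
    (α ≠ -1 → ∃ C : ℝ, ∀ z ∈ biDisk, ‖psi1 α z‖ ≤ C) := by
  refine ⟨fun z hz => psi1_eq hα hz, fun z hz => psi1_neg_one hz, ?_, ?_⟩
  · rintro ⟨C, hC⟩
    set t : ℝ := 1 / (2 * (|C| + 1)) with ht
    have htpos : 0 < t := by positivity
    have ht1 : t < 1 := by
      rw [ht, div_lt_one (by positivity)]
      nlinarith [abs_nonneg C]
    set z : ℂ × ℂ := (⟨1 - t^2, -t⟩, ⟨1 - t^2, t⟩) with hzdef
    have hmem : z ∈ biDisk := by
      constructor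
      · have h : ‖z.1‖^2 = (1 - t^2)^2 + t^2 := by
          rw [Complex.sq_norm]
          show Complex.normSq ⟨1 - t^2, -t⟩ = _
          rw [Complex.normSq_mk]; ring
        have ht2 : t^2 < 1 := by nlinarith
        have hlt1 : (1 - t^2)^2 + t^2 < 1 := by
          nlinarith [mul_pos (mul_pos htpos htpos) (show (0:ℝ) < 1 - t^2 by linarith)]
        nlinarith [norm_nonneg z.1, h, hlt1]
      · have h : ‖z.2‖^2 = (1 - t^2)^2 + t^2 := by
          rw [Complex.sq_norm]
          show Complex.normSq ⟨1 - t^2, t⟩ = _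
          rw [Complex.normSq_mk]; ring
        have ht2 : t^2 < 1 := by nlinarith
        have hlt1 : (1 - t^2)^2 + t^2 < 1 := by
          nlinarith [mul_pos (mul_pos htpos htpos) (show (0:ℝ) < 1 - t^2 by linarith)]
        nlinarith [norm_nonneg z.2, h, hlt1]
    have hval : psi1 (-1) z = (1 - z.2) / (2 - z.1 - z.2) := psi1_neg_one hmem
    have hden : (2 : ℂ) - z.1 - z.2 = ⟨2 * t^2, 0⟩ := by
      apply Complex.ext <;> simp [hzdef] <;> ring
    have hnum_im : ((1 : ℂ) - z.2).im = -t := by simp [hzdef]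
    have hlow : t ≤ ‖(1 : ℂ) - z.2‖ := by
      have := Complex.abs_im_le_norm ((1 : ℂ) - z.2)
      rw [hnum_im] at this
      simpa [abs_of_pos htpos] using this
    have hdnorm : ‖(2 : ℂ) - z.1 - z.2‖ = 2 * t^2 := by
      rw [hden, Complex.norm_def, Complex.normSq_mk]
      rw [show (2 * t^2) * (2 * t^2) + 0 * 0 = (2 * t^2)^2 by ring,
        Real.sqrt_sq (by positivity)]
    have hbig : (1 : ℝ) / (2 * t) ≤ ‖psi1 (-1) z‖ := by
      rw [hval, norm_div, hdnorm]
      rw [div_le_div_iff₀ (by positivity) (by positivity)]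
      nlinarith
    have hval2 : (1 : ℝ) / (2 * t) = |C| + 1 := by
      rw [ht]
      field_simp
    rw [hval2] at hbig
    have h1 := hC z hmem
    have h2 := le_abs_self C
    linarith
  · intro hne
    have hre : -1 < α.re := by
      have h1 : |α.re| ≤ ‖α‖ := Complex.abs_re_le_norm α
      rw [hα] at h1
      rcases lt_or_eq_of_le (neg_le_of_abs_le h1) with h | h
      · exact h
      · exfalso
        have hsq : α.re ^ 2 + α.im ^ 2 = 1 := by
          have := Complex.sq_norm α
          rw [hα, Complex.normSq_apply] at this
          nlinarith
        have him : α.im = 0 := by nlinarith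
        apply hne
        apply Complex.ext <;> simp [← h, him]
    have hsq : α.re ^ 2 + α.im ^ 2 = 1 := by
      have := Complex.sq_norm α
      rw [hα, Complex.normSq_apply] at this
      nlinarith
    have hlt : ‖(1 : ℂ) - conj α‖ < 2 := by
      have h : ‖(1 : ℂ) - conj α‖ ^ 2 = 2 - 2 * α.re := by
        rw [Complex.sq_norm, Complex.normSq_apply]
        simp [Complex.sub_re, Complex.sub_im]
        nlinarith
      nlinarith [norm_nonneg ((1 : ℂ) - conj α)]
    set d : ℝ := 2 - ‖(1 : ℂ) - conj α‖ with hd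
    have hdpos : 0 < d := by linarith
    refine ⟨4 / d, fun z hz => ?_⟩
    obtain ⟨hz1, hz2⟩ := hz
    have h1 : (2:ℂ) - z.1 - z.2 ≠ 0 := two_sub_ne hz1 hz2
    have h3 := d3_ne hα hz2
    rw [psi1_eq hα ⟨hz1, hz2⟩]
    set n1 : ℝ := ‖(1 - conj α) * z.2 - 2‖ with hn1
    set n2 : ℝ := ‖(2 : ℂ) - z.1 - z.2‖ with hn2
    have hn2pos : 0 < n2 := norm_pos_iff.mpr h1
    have hn1ge : d ≤ n1 := by
      have ha : ‖(2 : ℂ)‖ - ‖(1 - conj α) * z.2‖ ≤ ‖(2 : ℂ) - (1 - conj α) * z.2‖ :=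
        norm_sub_norm_le _ _
      have hb : ‖(2 : ℂ) - (1 - conj α) * z.2‖ = n1 := by
        rw [hn1, norm_sub_rev]
      have hc : ‖(1 - conj α) * z.2‖ ≤ ‖(1 : ℂ) - conj α‖ := by
        rw [norm_mul]
        nlinarith [norm_nonneg ((1:ℂ) - conj α), norm_nonneg z.2]
      have h2 : ‖(2 : ℂ)‖ = 2 := by norm_num
      rw [hb, h2] at ha
      linarith
    have hs2 : ‖z.2 - 1‖ ^ 2 ≤ 2 * n2 := by
      have hre1 : z.1.re < 1 := by
        have h := Complex.abs_re_le_norm z.1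
        exact (abs_lt.mp (h.trans_lt hz1)).2
      have hreD : (2 : ℝ) - z.1.re - z.2.re ≤ n2 := by
        have := Complex.re_le_norm ((2 : ℂ) - z.1 - z.2)
        simpa using this
      have hnsq : ‖z.2 - 1‖ ^ 2 = z.2.re^2 + z.2.im^2 - 2 * z.2.re + 1 := by
        rw [Complex.sq_norm, Complex.normSq_apply]
        simp [Complex.sub_re, Complex.sub_im]
        ring
      have hz2sq : z.2.re^2 + z.2.im^2 < 1 := by
        have h : ‖z.2‖^2 = z.2.re^2 + z.2.im^2 := by
          rw [Complex.sq_norm, Complex.normSq_apply]; ring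
        nlinarith [norm_nonneg z.2, hz2, h]
      nlinarith
    rw [norm_mul, norm_div, norm_div, norm_pow]
    rw [norm_mul, RCLike.norm_conj, hα]
    have h2n : ‖(2 : ℂ)‖ = 2 := by norm_num
    rw [h2n]
    rw [← hn1, ← hn2, div_mul_div_comm]
    have hn1pos : 0 < n1 := lt_of_lt_of_le hdpos hn1ge
    rw [div_le_div_iff₀ (mul_pos hn1pos hn2pos) hdpos]
    nlinarith [mul_le_mul_of_nonneg_left hs2 hdpos.le,
      mul_le_mul_of_nonneg_left hn1ge (by positivity : (0:ℝ) ≤ 4 * n2)]
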